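/- arXiv:math/0502133 — 2 statements merged into one kernel-verified Lean document; each statement's English description precedes it below -/
import Mathlib

section
/- Let E/k be a totally ramified finite extension of p-adic fields of degree prime to p (tame). Then for every integer t ≥ 1 and every prime l ≠ p, the inclusion of unit groups O_k^* ⊆ O_E^* induces an isomorphism O_k^*/(O_k^*)^{l^t} → O_E^*/(O_E^*)^{l^t}. -/
/-
Both quotients are computed by the residue field. Total ramification forces the residue fields of
`k` and `E` to agree: otherwise, for a unit `u` of `E` not congruent to any element of `k` and a
uniformizer `π`, the `2n` vectors `π ^ j, u * π ^ j` (`j < n = [E : k]`) would be `k`-linearly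
independent, since the valuations of their `k`-combinations are distinct modulo `n`. So every unit
of `E` is a unit of `k` times a principal unit. As `l ≠ p`, `m = l ^ t` is a unit, and in the
complete fields `k` and `E` the Newton map `z ↦ z - (z ^ m - u) / m` (derivative frozen at `1`)
contracts the ball of principal units, so every principal unit is an `m`-th power.
-/

open scoped Multiplicative

local notation "ℤₘ₀" => WithZero (Multiplicative ℤ)

noncomputable section

/-- The group of units of a `ℤₘ₀`-valued valuation: the subgroup of `kˣ` consisting of
elements of valuation `1` (i.e. the units `O_k^*` of the valuation ring `O_k`). -/
def Valuation.unitGroup' {k : Type*} [Field k] (v : Valuation k ℤₘ₀) : Subgroup kˣ where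
  carrier := {u | v (u : k) = 1}
  one_mem' := by simp
  mul_mem' := by
    intro a b ha hb
    simp only [Set.mem_setOf_eq, Units.val_mul, map_mul] at *
    rw [ha, hb, one_mul]
  inv_mem' := by
    intro a ha
    simp only [Set.mem_setOf_eq] at *
    have h : v ((a : k)) * v ((a⁻¹ : kˣ) : k) = 1 := by
      rw [← map_mul]; norm_num
    rw [ha, one_mul] at h
    exact h

/-- The map on unit groups `O_k^* → O_E^*` induced by an embedding of valued fields,
assuming units of the valuation ring map to units of the valuation ring. -/
def unitGroupMap {k E : Type*} [Field k] [Field E] [Algebra k E]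
    (vk : Valuation k ℤₘ₀) (vE : Valuation E ℤₘ₀)
    (h : ∀ u : kˣ, u ∈ vk.unitGroup' → (Units.map (algebraMap k E : k →* E)) u ∈ vE.unitGroup') :
    vk.unitGroup' →* vE.unitGroup' :=
  MonoidHom.codRestrict ((Units.map (algebraMap k E : k →* E)).comp vk.unitGroup'.subtype)
    vE.unitGroup' (fun u => h u u.2)

/-- The induced map on quotients `O_k^*/(O_k^*)^m → O_E^*/(O_E^*)^m`. -/
def unitGroupQuotMap {k E : Type*} [Field k] [Field E] [Algebra k E]
    (vk : Valuation k ℤₘ₀) (vE : Valuation E ℤₘ₀)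
    (h : ∀ u : kˣ, u ∈ vk.unitGroup' → (Units.map (algebraMap k E : k →* E)) u ∈ vE.unitGroup')
    (m : ℕ) :
    vk.unitGroup' ⧸ (powMonoidHom m : vk.unitGroup' →* vk.unitGroup').range →*
      vE.unitGroup' ⧸ (powMonoidHom m : vE.unitGroup' →* vE.unitGroup').range :=
  QuotientGroup.map _ _ (unitGroupMap vk vE h) (by
    rintro x ⟨y, rfl⟩
    exact ⟨unitGroupMap vk vE h y, by simp [powMonoidHom_apply, map_pow]⟩)

namespace IsUltrametricDist

open Metric Set

variable {K : Type*} [NormedField K] [IsUltrametricDist K]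

lemma norm_sub_le_max (a b : K) : ‖a - b‖ ≤ max ‖a‖ ‖b‖ := by
  simpa [sub_eq_add_neg] using norm_add_le_max a (-b)

lemma norm_le_one_of_norm_sub_one_le_one {a : K} (h : ‖a - 1‖ ≤ 1) : ‖a‖ ≤ 1 := by
  simpa using (norm_add_le_max (a - 1) 1).trans (max_le h norm_one.le)

lemma norm_pow_sub_pow_le {a b : K} (ha : ‖a‖ ≤ 1) (hb : ‖b‖ ≤ 1) (m : ℕ) :
    ‖a ^ m - b ^ m‖ ≤ ‖a - b‖ := by
  rw [← geom_sum₂_mul, norm_mul]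
  refine mul_le_of_le_one_left (norm_nonneg _) <|
    norm_sum_le_of_forall_le_of_nonneg zero_le_one fun i _ => ?_
  rw [norm_mul, norm_pow, norm_pow]
  exact mul_le_one₀ (pow_le_one₀ (norm_nonneg _) ha) (by positivity)
    (pow_le_one₀ (norm_nonneg _) hb)

lemma norm_pow_mul_pow_sub_one_le {δ : ℝ} (hδ : δ ≤ 1) {a b : K} (ha : ‖a - 1‖ ≤ δ)
    (hb : ‖b - 1‖ ≤ δ) (i j : ℕ) : ‖a ^ i * b ^ j - 1‖ ≤ δ := by
  have ha1 := norm_le_one_of_norm_sub_one_le_one (ha.trans hδ)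
  have hb1 := norm_le_one_of_norm_sub_one_le_one (hb.trans hδ)
  have hai : ‖a ^ i - 1‖ ≤ δ := by
    simpa using (norm_pow_sub_pow_le ha1 norm_one.le i).trans ha
  have hbj : ‖b ^ j - 1‖ ≤ δ := by
    simpa using (norm_pow_sub_pow_le hb1 norm_one.le j).trans hb
  calc ‖a ^ i * b ^ j - 1‖ = ‖(a ^ i - 1) * b ^ j + (b ^ j - 1)‖ := by ring_nf
    _ ≤ δ := by
      refine (norm_add_le_max _ _).trans (max_le ?_ hbj)
      rw [norm_mul, norm_pow]
      exact (mul_le_of_le_one_right (norm_nonneg _) (pow_le_one₀ (norm_nonneg _) hb1)).trans hai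

lemma norm_pow_sub_pow_sub_mul_le {δ : ℝ} (hδ : δ ≤ 1) {a b : K} (ha : ‖a - 1‖ ≤ δ)
    (hb : ‖b - 1‖ ≤ δ) (m : ℕ) : ‖a ^ m - b ^ m - m * (a - b)‖ ≤ δ * ‖a - b‖ := by
  have hδ0 : 0 ≤ δ := (norm_nonneg _).trans ha
  have hsplit : a ^ m - b ^ m - m * (a - b) =
      (∑ i ∈ Finset.range m, (a ^ i * b ^ (m - 1 - i) - 1)) * (a - b) := by
    rw [Finset.sum_sub_distrib, sub_mul, geom_sum₂_mul]
    simp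
  rw [hsplit, norm_mul]
  gcongr
  exact norm_sum_le_of_forall_le_of_nonneg hδ0 fun i _ => norm_pow_mul_pow_sub_one_le hδ ha hb _ _

theorem exists_pow_eq_of_norm_sub_one_lt [CompleteSpace K] {m : ℕ} (hm : ‖(m : K)‖ = 1)
    {u : K} (hu : ‖u - 1‖ < 1) : ∃ z : K, ‖z - 1‖ < 1 ∧ z ^ m = u := by
  have hm0 : (m : K) ≠ 0 := norm_ne_zero_iff.mp (hm ▸ one_ne_zero)
  set δ : NNReal := ‖u - 1‖₊
  have hδ : (δ : ℝ) ≤ 1 := hu.le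
  set F : K → K := fun z => z - (z ^ m - u) / m
  have hF : ∀ z w, F z - F w = -((z ^ m - w ^ m - m * (z - w)) / m) := by
    intro z w; simp only [F]; field_simp; ring
  have hmaps : MapsTo F (closedBall 1 δ) (closedBall 1 δ) := by
    intro z hz
    rw [mem_closedBall_iff_norm] at hz ⊢
    have hzm : ‖z ^ m - 1‖ ≤ δ := by
      simpa using (norm_pow_sub_pow_le (norm_le_one_of_norm_sub_one_le_one (hz.trans hδ))
        norm_one.le m).trans hz
    have hstep : ‖(z ^ m - u) / m‖ ≤ δ := by
      rw [norm_div, hm, div_one, ← sub_sub_sub_cancel_right _ _ 1]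
      exact (norm_sub_le_max _ _).trans (max_le hzm le_rfl)
    have hFz : F z - 1 = (z - 1) - (z ^ m - u) / m := by simp only [F]; ring
    exact hFz ▸ (norm_sub_le_max _ _).trans (max_le hz hstep)
  have hcontr : ContractingWith δ (hmaps.restrict F _ _) := by
    refine ⟨hu, LipschitzWith.of_dist_le_mul fun z w => ?_⟩
    simp only [Subtype.dist_eq, MapsTo.val_restrict_apply, dist_eq_norm, hF, norm_neg,
      norm_div, hm, div_one]
    exact norm_pow_sub_pow_sub_mul_le hδ (mem_closedBall_iff_norm.mp z.2)
      (mem_closedBall_iff_norm.mp w.2) m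
  obtain ⟨z, hz, hfix, -⟩ := hcontr.exists_fixedPoint' isClosed_closedBall.isComplete hmaps
    (mem_closedBall_self δ.2) (edist_ne_top _ _)
  refine ⟨z, (mem_closedBall_iff_norm.mp hz).trans_lt hu, ?_⟩
  have : (z ^ m - u) / m = 0 := sub_eq_self.mp hfix
  rwa [div_eq_zero_iff, or_iff_left hm0, sub_eq_zero] at this

end IsUltrametricDist

theorem RingHom.continuous_of_norm_lt_one {F L : Type*} [NontriviallyNormedField F]
    [NormedField L] (f : F →+* L) (hf : ∀ x, ‖x‖ < 1 → ‖f x‖ < 1) : Continuous f := by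
  refine continuous_of_continuousAt_zero f.toAddMonoidHom ?_
  rw [ContinuousAt, map_zero, Metric.tendsto_nhds_nhds]
  intro ε hε
  obtain ⟨π, hπ0, hπ1⟩ := NormedField.exists_norm_lt_one F
  obtain ⟨M, hM⟩ := exists_pow_lt_of_lt_one hε (hf π hπ1)
  refine ⟨‖π‖ ^ M, by positivity, fun x hx => ?_⟩
  have hπM : π ^ M ≠ 0 := pow_ne_zero _ (norm_pos_iff.mp hπ0)
  have hxπ : ‖x / π ^ M‖ < 1 := by
    rw [norm_div, norm_pow, div_lt_one (by positivity)]
    simpa using hx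
  calc dist (f x) 0 = ‖f (x / π ^ M)‖ * ‖f π‖ ^ M := by
        rw [dist_zero_right, ← norm_pow, ← norm_mul, ← map_pow, ← map_mul, div_mul_cancel₀ _ hπM]
    _ ≤ ‖f π‖ ^ M := mul_le_of_le_one_left (by positivity) (hf _ hxπ).le
    _ < ε := hM

namespace Valuation

variable {K Γ₀ : Type*} [Field K] [LinearOrderedCommGroupWithZero Γ₀]

lemma map_natCast_le_one (v : Valuation K Γ₀) (n : ℕ) : v n ≤ 1 := by
  induction n with
  | zero => simp
  | succ n ih => exact (v.map_add_le ih v.map_one.le).trans_eq' (by push_cast; rfl)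

lemma map_div_sub_one (v : Valuation K Γ₀) {a b : K} (hb : v b = 1) :
    v (a / b - 1) = v (a - b) := by
  have hb0 : b ≠ 0 := v.ne_zero_iff.mp (hb ▸ one_ne_zero)
  rw [div_sub_one hb0, map_div₀, hb, div_one]

lemma map_pow_sub_pow_le (v : Valuation K Γ₀) {a b : K} (ha : v a ≤ 1) (hb : v b ≤ 1) (m : ℕ) :
    v (a ^ m - b ^ m) ≤ v (a - b) := by
  rw [← geom_sum₂_mul, map_mul]
  refine mul_le_of_le_one_left' (v.map_sum_le fun i _ => ?_)
  rw [map_mul, map_pow, map_pow]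
  exact mul_le_one' (pow_le_one' ha _) (pow_le_one' hb _)

theorem sum_ne_zero_of_injOn (v : Valuation K Γ₀) {ι : Type*} {s : Finset ι} {f : ι → K}
    (hs : ∃ i ∈ s, f i ≠ 0) (hinj : Set.InjOn (fun i => v (f i)) {i ∈ s | f i ≠ 0}) :
    ∑ i ∈ s, f i ≠ 0 := by
  classical
  obtain ⟨i₀, hi₀, hfi₀⟩ := hs
  obtain ⟨j, hj, hmax⟩ := s.exists_max_image (fun i => v (f i)) ⟨i₀, hi₀⟩
  have hfj : f j ≠ 0 := fun h => hfi₀ <| v.zero_iff.mp <| le_zero_iff.mp <| by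
    simpa [h] using hmax i₀ hi₀
  rw [← v.ne_zero_iff, v.map_sum_eq_of_lt hj fun i hi => ?_]
  · exact v.ne_zero_iff.mpr hfj
  obtain ⟨his, hij⟩ := Finset.mem_sdiff.mp hi
  refine (hmax i his).lt_of_ne fun h => Finset.notMem_singleton.mp hij (hinj ⟨his, ?_⟩ ⟨hj, hfj⟩ h)
  exact fun hfi => hfj (v.zero_iff.mp (by simpa [hfi] using h.symm))

abbrev rankOneOfNeOne (v : Valuation K ℤₘ₀) {x : K} (h0 : v x ≠ 0) (h1 : v x ≠ 1) :
    v.RankOne where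
  hom' := (WithZeroMulInt.toNNReal two_ne_zero).comp MonoidWithZeroHom.ValueGroup₀.embedding
  strictMono' := (WithZeroMulInt.toNNReal_strictMono one_lt_two).comp
    MonoidWithZeroHom.ValueGroup₀.embedding_strictMono
  exists_val_nontrivial := ⟨x, h0, h1⟩

/-- By `hv` the map `F → K` is continuous for `v`, which makes `K` complete as a
finite-dimensional `F`-space. -/
theorem exists_pow_eq_of_map_sub_one_lt {F : Type*} [NontriviallyNormedField F]
    [CompleteSpace F] [Algebra F K] [FiniteDimensional F K] (v : Valuation K ℤₘ₀)
    (hv : ∀ x : F, ‖x‖ < 1 → v (algebraMap F K x) < 1) {m : ℕ} (hm : v m = 1) {u : K}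
    (hu : v (u - 1) < 1) : ∃ z : K, v z = 1 ∧ z ^ m = u := by
  let : Valued K ℤₘ₀ := Valued.mk' v
  obtain ⟨π, hπ0, hπ1⟩ := NormedField.exists_norm_lt_one F
  let : (Valued.v : Valuation K ℤₘ₀).RankOne :=
    rankOneOfNeOne v (v.ne_zero_iff.mpr ((map_ne_zero _).mpr (norm_pos_iff.mp hπ0)))
      (hv π hπ1).ne
  let : NormedField K := Valued.toNormedField K ℤₘ₀
  have hnorm_lt : ∀ x : K, ‖x‖ < 1 ↔ v x < 1 := fun x => Valued.toNormedField.norm_lt_one_iff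
  have : ContinuousSMul F K := continuousSMul_of_algebraMap F K <|
    (algebraMap F K).continuous_of_norm_lt_one fun x hx => (hnorm_lt _).mpr (hv x hx)
  have : CompleteSpace K := FiniteDimensional.complete F K
  have hm' : ‖(m : K)‖ = 1 := le_antisymm (Valued.toNormedField.norm_le_one_iff.mpr hm.le)
    (Valued.toNormedField.one_le_norm_iff.mpr hm.ge)
  obtain ⟨z, hz, rfl⟩ :=
    IsUltrametricDist.exists_pow_eq_of_norm_sub_one_lt hm' ((hnorm_lt _).mpr hu)
  exact ⟨z, (v.map_eq_of_sub_lt (by rwa [map_one, ← hnorm_lt])).trans v.map_one, rfl⟩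

lemma mem_range_powMonoidHom_unitGroup'_iff (v : Valuation K ℤₘ₀) (m : ℕ) (u : v.unitGroup') :
    u ∈ (powMonoidHom m : v.unitGroup' →* v.unitGroup').range ↔
      ∃ z : K, v z = 1 ∧ z ^ m = (u : Kˣ) := by
  constructor
  · rintro ⟨y, rfl⟩
    exact ⟨(y : Kˣ), y.2, rfl⟩
  · rintro ⟨z, hz, hzu⟩
    exact ⟨⟨Units.mk0 z (v.ne_zero_iff.mp (hz ▸ one_ne_zero)), hz⟩, Subtype.ext (Units.ext hzu)⟩

end Valuation

section TotallyRamified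

variable {k E : Type*} [Field k] [Field E] [Algebra k E] {vk : Valuation k ℤₘ₀}
  {vE : Valuation E ℤₘ₀}

def TrivialResidueExtension (vk : Valuation k ℤₘ₀) (vE : Valuation E ℤₘ₀) : Prop :=
  ∀ u : E, vE u = 1 → ∃ z : k, vk z = 1 ∧ vE (u - algebraMap k E z) < 1

lemma map_algebraMap_add_mul_eq_max {u : E} (hu : vE u = 1)
    (hfar : ∀ z : k, vE (algebraMap k E z) = 1 → 1 ≤ vE (u - algebraMap k E z)) (a b : k) :
    vE (algebraMap k E a + algebraMap k E b * u) =
      max (vE (algebraMap k E a)) (vE (algebraMap k E b)) := by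
  rcases eq_or_ne b 0 with rfl | hb
  · simp
  have hsub : ∀ c : k, vE (u - algebraMap k E c) = max 1 (vE (algebraMap k E c)) := by
    intro c
    by_cases hc : vE (algebraMap k E c) = 1
    · rw [hc, max_self]
      exact le_antisymm ((vE.map_sub _ _).trans (by rw [hu, hc, max_self])) (hfar c hc)
    · rw [sub_eq_add_neg, vE.map_add_of_distinct_val (by rwa [vE.map_neg, hu, ne_comm]),
        vE.map_neg, hu]
  have hsplit : algebraMap k E a + algebraMap k E b * u =
      algebraMap k E b * (u - algebraMap k E (-(a / b))) := by
    rw [mul_sub, ← map_mul, mul_neg, mul_div_cancel₀ _ hb, map_neg]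
    ring
  rw [hsplit, map_mul, hsub, mul_max, mul_one, ← map_mul, ← map_mul, mul_neg,
    mul_div_cancel₀ _ hb, map_neg, vE.map_neg, max_comm]

open WithZero in
theorem linearIndependent_pow_sumElim_mul_pow
    (htot : ∀ x : k, vE (algebraMap k E x) = vk x ^ Module.finrank k E) {π : E}
    (hπ : vE π = exp (-1)) {u : E} (hu : vE u = 1)
    (hfar : ∀ z : k, vE (algebraMap k E z) = 1 → 1 ≤ vE (u - algebraMap k E z)) :
    LinearIndependent k (Sum.elim (fun j : Fin (Module.finrank k E) => π ^ (j : ℕ))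
      (fun j : Fin (Module.finrank k E) => u * π ^ (j : ℕ))) := by
  set n := Module.finrank k E
  -- `vE` takes values in `n ℤ` on `k`, so `log ∘ vE` modulo `n` tells the powers of `π` apart
  have hres : ∀ c : k, ((log (vE (algebraMap k E c)) : ℤ) : ZMod n) = 0 := by
    intro c
    simp [htot, log_pow]
  rw [Fintype.linearIndependent_iff]
  intro g hg
  set T : Fin n → E := fun j =>
    (algebraMap k E (g (.inl j)) + algebraMap k E (g (.inr j)) * u) * π ^ (j : ℕ)
  have hsum : ∑ j, T j = 0 := by
    rw [Fintype.sum_sum_type] at hg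
    simpa [T, Algebra.smul_def, add_mul, mul_assoc, Finset.sum_add_distrib] using hg
  have hvT : ∀ j, vE (T j) =
      max (vE (algebraMap k E (g (.inl j)))) (vE (algebraMap k E (g (.inr j)))) *
        exp (-1) ^ (j : ℕ) := by
    intro j
    simp only [T, map_mul, map_pow, hπ, map_algebraMap_add_mul_eq_max hu hfar]
  have hlogT : ∀ j, T j ≠ 0 → ((log (vE (T j)) : ℤ) : ZMod n) = -j := by
    intro j hj
    have h0 := vE.ne_zero_iff.mpr hj
    rw [hvT] at h0 ⊢
    rw [log_mul (left_ne_zero_of_mul h0) (right_ne_zero_of_mul h0), log_pow, log_exp]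
    rcases max_choice (vE (algebraMap k E (g (.inl j)))) (vE (algebraMap k E (g (.inr j))))
      with h | h <;> simp [h, hres]
  have hinj : Set.InjOn (fun j => vE (T j)) {j ∈ Finset.univ | T j ≠ 0} := by
    intro i hi j hj hij
    have hij' : (i : ZMod n) = j :=
      neg_injective <| (hlogT i hi.2).symm.trans <|
        (congrArg (fun x => ((log x : ℤ) : ZMod n)) hij).trans (hlogT j hj.2)
    rw [ZMod.natCast_eq_natCast_iff', Nat.mod_eq_of_lt i.2, Nat.mod_eq_of_lt j.2] at hij'
    exact Fin.ext hij'
  have hT : ∀ j, (g (.inl j) ≠ 0 ∨ g (.inr j) ≠ 0) → T j ≠ 0 := by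
    intro j hj
    rw [← vE.ne_zero_iff, hvT]
    refine mul_ne_zero (ne_of_gt (lt_max_iff.mpr ?_)) (pow_ne_zero _ exp_ne_zero)
    exact hj.imp (fun h => zero_lt_iff.mpr (by simpa using h))
      (fun h => zero_lt_iff.mpr (by simpa using h))
  intro i
  by_contra hi
  refine vE.sum_ne_zero_of_injOn ?_ hinj hsum
  rcases i with j | j
  · exact ⟨j, Finset.mem_univ _, hT j (.inl hi)⟩
  · exact ⟨j, Finset.mem_univ _, hT j (.inr hi)⟩

variable [FiniteDimensional k E]

lemma map_algebraMap_eq_one_iff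
    (htot : ∀ x : k, vE (algebraMap k E x) = vk x ^ Module.finrank k E) (x : k) :
    vE (algebraMap k E x) = 1 ↔ vk x = 1 := by
  rw [htot, pow_eq_one_iff, or_iff_left Module.finrank_pos.ne']

lemma map_algebraMap_lt_one_iff
    (htot : ∀ x : k, vE (algebraMap k E x) = vk x ^ Module.finrank k E) (x : k) :
    vE (algebraMap k E x) < 1 ↔ vk x < 1 := by
  rw [htot, pow_lt_one_iff Module.finrank_pos.ne']

theorem trivialResidueExtension_of_totallyRamified (hvE : Function.Surjective vE)
    (htot : ∀ x : k, vE (algebraMap k E x) = vk x ^ Module.finrank k E) :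
    TrivialResidueExtension vk vE := by
  intro u hu
  by_contra! hfar
  obtain ⟨π, hπ⟩ := hvE (WithZero.exp (-1))
  have hcard := (linearIndependent_pow_sumElim_mul_pow htot hπ hu fun z hz =>
    hfar z ((map_algebraMap_eq_one_iff htot z).mp hz)).fintype_card_le_finrank
  simp only [Fintype.card_sum, Fintype.card_fin] at hcard
  have := Module.finrank_pos (R := k) (M := E)
  omega

end TotallyRamified

namespace QuotientGroup

variable {G H : Type*} [Group G] [Group H] {N : Subgroup G} [N.Normal] {M : Subgroup H}
  [M.Normal] {f : G →* H}

lemma map_injective_of_comap_le (h : N ≤ M.comap f) (h' : M.comap f ≤ N) :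
    Function.Injective (map N M f h) := by
  refine (injective_iff_map_eq_one _).mpr ?_
  rintro ⟨x⟩ hx
  exact (eq_one_iff x).mpr (h' ((eq_one_iff (f x)).mp hx))

lemma map_surjective_of_forall_exists_inv_mul_mem (h : N ≤ M.comap f)
    (h' : ∀ y, ∃ x, (f x)⁻¹ * y ∈ M) : Function.Surjective (map N M f h) := by
  rintro ⟨y⟩
  obtain ⟨x, hx⟩ := h' y
  exact ⟨x, QuotientGroup.eq.mpr hx⟩

end QuotientGroup

section UnitGroups

variable {k E : Type*} [Field k] [Field E] [Algebra k E] {vk : Valuation k ℤₘ₀}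
  {vE : Valuation E ℤₘ₀}

lemma map_algebraMap_eq_one_of_unitGroup'
    (hunits : ∀ u : kˣ, u ∈ vk.unitGroup' →
      (Units.map (algebraMap k E : k →* E)) u ∈ vE.unitGroup') {z : k} (hz : vk z = 1) :
    vE (algebraMap k E z) = 1 :=
  hunits (Units.mk0 z (vk.ne_zero_iff.mp (hz ▸ one_ne_zero))) hz

variable (hunits : ∀ u : kˣ, u ∈ vk.unitGroup' →
  (Units.map (algebraMap k E : k →* E)) u ∈ vE.unitGroup')

@[simp]
lemma coe_unitGroupMap (x : vk.unitGroup') :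
    ((unitGroupMap vk vE hunits x : Eˣ) : E) = algebraMap k E (x : kˣ) := rfl

theorem unitGroupQuotMap_injective {m : ℕ} (hres : TrivialResidueExtension vk vE)
    (hlt : ∀ x : k, vE (algebraMap k E x) < 1 → vk x < 1)
    (hk : ∀ u : k, vk (u - 1) < 1 → ∃ z : k, vk z = 1 ∧ z ^ m = u) :
    Function.Injective (unitGroupQuotMap vk vE hunits m) := by
  refine QuotientGroup.map_injective_of_comap_le _ fun x hx => ?_
  rw [Subgroup.mem_comap, vE.mem_range_powMonoidHom_unitGroup'_iff, coe_unitGroupMap] at hx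
  obtain ⟨w, hw, hwx⟩ := hx
  obtain ⟨z, hz, hwz⟩ := hres w hw
  have hzm : z ^ m ≠ 0 := pow_ne_zero _ (vk.ne_zero_iff.mp (hz ▸ one_ne_zero))
  have hx1 : vk ((x : kˣ) / z ^ m - 1) < 1 := by
    rw [vk.map_div_sub_one (by rw [map_pow, hz, one_pow])]
    refine hlt _ ?_
    rw [map_sub, map_pow, ← hwx]
    exact (vE.map_pow_sub_pow_le hw.le (map_algebraMap_eq_one_of_unitGroup' hunits hz).le m
      ).trans_lt hwz
  obtain ⟨y, hy, hyx⟩ := hk _ hx1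
  refine (vk.mem_range_powMonoidHom_unitGroup'_iff m x).mpr ⟨y * z, ?_, ?_⟩
  · rw [map_mul, hy, hz, one_mul]
  · rw [mul_pow, hyx, div_mul_cancel₀ _ hzm]

theorem unitGroupQuotMap_surjective {m : ℕ} (hres : TrivialResidueExtension vk vE)
    (hE : ∀ u : E, vE (u - 1) < 1 → ∃ z : E, vE z = 1 ∧ z ^ m = u) :
    Function.Surjective (unitGroupQuotMap vk vE hunits m) := by
  refine QuotientGroup.map_surjective_of_forall_exists_inv_mul_mem _ fun w => ?_
  obtain ⟨z, hz, hwz⟩ := hres (w : Eˣ) w.2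
  refine ⟨⟨Units.mk0 z (vk.ne_zero_iff.mp (hz ▸ one_ne_zero)), hz⟩,
    (vE.mem_range_powMonoidHom_unitGroup'_iff m _).mpr (hE _ ?_)⟩
  simpa [inv_mul_eq_div, vE.map_div_sub_one (map_algebraMap_eq_one_of_unitGroup' hunits hz)]
    using hwz

end UnitGroups

theorem units_mod_lpow_iso_of_tame_totally_ramified_general
    (p l : ℕ) [Fact p.Prime] (hl : l.Prime) (hlp : l ≠ p) (t : ℕ)
    (k E : Type) [Field k] [Field E]
    [Algebra ℚ_[p] k] [FiniteDimensional ℚ_[p] k]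
    [Algebra k E] [FiniteDimensional k E]
    (vk : Valuation k ℤₘ₀) (vE : Valuation E ℤₘ₀)
    (hvE : Function.Surjective vE)
    (hpin : ∀ x : ℚ_[p], vk (algebraMap ℚ_[p] k x) < 1 ↔ ‖x‖ < 1)
    (htot : ∀ x : k, vE (algebraMap k E x) = (vk x) ^ (Module.finrank k E))
    (hunits : ∀ u : kˣ, u ∈ vk.unitGroup' →
      (Units.map (algebraMap k E : k →* E)) u ∈ vE.unitGroup') :
    Function.Bijective (unitGroupQuotMap vk vE hunits (l ^ t)) := by
  have hlk : vk ((l ^ t : ℕ) : k) = 1 := by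
    have hl1 : ¬ vk (l : k) < 1 := by
      rw [← map_natCast (algebraMap ℚ_[p] k), hpin, Padic.norm_natCast_lt_one_iff]
      exact fun h => hlp ((Nat.prime_dvd_prime_iff_eq Fact.out hl).mp h).symm
    rw [Nat.cast_pow, map_pow, le_antisymm (vk.map_natCast_le_one l) (not_lt.mp hl1), one_pow]
  have hlE : vE ((l ^ t : ℕ) : E) = 1 := by
    rwa [← map_natCast (algebraMap k E), map_algebraMap_eq_one_iff htot]
  let : Algebra ℚ_[p] E := ((algebraMap k E).comp (algebraMap ℚ_[p] k)).toAlgebra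
  have : IsScalarTower ℚ_[p] k E := IsScalarTower.of_algebraMap_eq' rfl
  have : FiniteDimensional ℚ_[p] E := .trans ℚ_[p] k E
  have hres := trivialResidueExtension_of_totallyRamified hvE htot
  refine ⟨unitGroupQuotMap_injective hunits hres (fun x => (map_algebraMap_lt_one_iff htot x).mp)
    fun u => vk.exists_pow_eq_of_map_sub_one_lt (fun x => (hpin x).mpr) hlk,
    unitGroupQuotMap_surjective hunits hres fun u =>
      vE.exists_pow_eq_of_map_sub_one_lt (F := ℚ_[p]) (fun x hx => ?_) hlE⟩
  rw [IsScalarTower.algebraMap_apply ℚ_[p] k E, map_algebraMap_lt_one_iff htot]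
  exact (hpin x).mpr hx

/-- **Tame totally ramified extensions induce isomorphisms on units modulo `l`-power powers**
(used in the proofs of Lemme 7 and Lemme 8 of Colliot-Thélène's article).

Let `k` be a `p`-adic field and `E/k` a finite *totally ramified* extension of degree prime
to `p` (tame).  Then for every integer `t ≥ 1` and every prime `l ≠ p`, the inclusion of unit
groups `O_k^* ⊆ O_E^*` induces an isomorphism `O_k^*/(O_k^*)^{l^t} ≃ O_E^*/(O_E^*)^{l^t}`.

Here `vk`, `vE` are the normalized (surjective) `ℤₘ₀`-valued valuations of `k` and `E`;
the hypothesis `hpin` pins `vk` down to be the `p`-adic valuation, and total ramification of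
`E/k` is expressed by `vE(x) = vk(x)^[E:k]` for `x ∈ k`. -/
theorem units_mod_lpow_iso_of_tame_totally_ramified
    (p l : ℕ) [Fact p.Prime] (hl : l.Prime) (hlp : l ≠ p) (t : ℕ) (ht : 1 ≤ t)
    (k E : Type) [Field k] [Field E]
    [Algebra ℚ_[p] k] [FiniteDimensional ℚ_[p] k]
    [Algebra k E] [FiniteDimensional k E]
    (vk : Valuation k ℤₘ₀) (vE : Valuation E ℤₘ₀)
    (hvk : Function.Surjective vk) (hvE : Function.Surjective vE)
    (hpin : ∀ x : ℚ_[p], vk (algebraMap ℚ_[p] k x) < 1 ↔ ‖x‖ < 1)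
    (htot : ∀ x : k, vE (algebraMap k E x) = (vk x) ^ (Module.finrank k E))
    (htame : (Module.finrank k E).Coprime p)
    (hunits : ∀ u : kˣ, u ∈ vk.unitGroup' →
      (Units.map (algebraMap k E : k →* E)) u ∈ vE.unitGroup') :
    Function.Bijective (unitGroupQuotMap vk vE hunits (l ^ t)) :=
  units_mod_lpow_iso_of_tame_totally_ramified_general p l hl hlp t k E vk vE hvE hpin htot hunits
end
end

section
/- Let k be a p-adic field and X a smooth projective rationally connected k-variety. If the group A_0(X) is finite, then there exists an integer m ≥ 1 such that every zero-cycle on X of degree at least m is rationally equivalent to an effective zero-cycle. -/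
noncomputable section

/-! ### An interface for zero-cycles on smooth projective varieties

Chow groups of zero-cycles are not available in Mathlib.  We axiomatize, as a structure,
the standard theory of zero-cycles on smooth projective (geometrically integral) varieties
over field extensions of a base field `k`: varieties, closed points and their degrees,
rational points, `R`-equivalence, the Chow group `CH₀` as a quotient of the group of
zero-cycles, the degree map, extension of scalars, and the flat pullback and proper
pushforward maps attached to a finite extension of base fields, with their standard degree
compatibilities. -/
structure ZeroCycleTheory (k : Type) [Field k] : Type 2 where
  /-- smooth projective geometrically integral varieties over a field `F` under `k` -/
  Var : (F : Type) → [Field F] → (k →+* F) → Type 1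
  /-- closed points of a variety -/
  Pt : ∀ {F : Type} [Field F] {ιF : k →+* F}, Var F ιF → Type
  /-- the degree `[κ(x) : F]` of a closed point -/
  ptDeg : ∀ {F : Type} [Field F] {ιF : k →+* F} {X : Var F ιF}, Pt X → ℕ
  ptDeg_pos : ∀ {F : Type} [Field F] {ιF : k →+* F} {X : Var F ιF} (x : Pt X), 0 < ptDeg x
  /-- rational points -/
  rpt : ∀ {F : Type} [Field F] {ιF : k →+* F}, Var F ιF → Type
  /-- a rational point is a closed point (of degree 1) -/
  rptToPt : ∀ {F : Type} [Field F] {ιF : k →+* F} {X : Var F ιF}, rpt X → Pt X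
  rptDeg : ∀ {F : Type} [Field F] {ιF : k →+* F} {X : Var F ιF} (x : rpt X),
    ptDeg (rptToPt x) = 1
  /-- the elementary `R`-relation on rational points (being connected by a chain of opens
  of `𝐏¹`) -/
  relem : ∀ {F : Type} [Field F] {ιF : k →+* F} (X : Var F ιF), rpt X → rpt X → Prop
  /-- the Chow group of zero-cycles modulo rational equivalence -/
  CH0 : ∀ {F : Type} [Field F] {ιF : k →+* F}, Var F ιF → Type
  [ab : ∀ {F : Type} [Field F] {ιF : k →+* F} (X : Var F ιF), AddCommGroup (CH0 X)]
  /-- the class in `CH₀` of a zero-cycle (a finite `ℤ`-combination of closed points) -/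
  cl : ∀ {F : Type} [Field F] {ιF : k →+* F} {X : Var F ιF}, (Pt X →₀ ℤ) →+ CH0 X
  cl_surjective : ∀ {F : Type} [Field F] {ιF : k →+* F} (X : Var F ιF),
    Function.Surjective (cl (X := X))
  /-- `R`-equivalent rational points are rationally equivalent -/
  cl_relem : ∀ {F : Type} [Field F] {ιF : k →+* F} (X : Var F ιF) (x y : rpt X),
    relem X x y → cl (Finsupp.single (rptToPt x) 1) = cl (Finsupp.single (rptToPt y) 1)
  /-- the degree map on `CH₀` -/
  deg : ∀ {F : Type} [Field F] {ιF : k →+* F} {X : Var F ιF}, CH0 X →+ ℤ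
  deg_cl : ∀ {F : Type} [Field F] {ιF : k →+* F} {X : Var F ιF} (z : Pt X →₀ ℤ),
    deg (cl z) = z.sum fun x n => n * (ptDeg x : ℤ)
  /-- extension of scalars along an extension of the base field -/
  bc : ∀ {F F' : Type} [Field F] [Field F'] {ιF : k →+* F} {ιF' : k →+* F'}
    (e : F →+* F'), e.comp ιF = ιF' → Var F ιF → Var F' ιF'
  /-- flat pullback along the projection `X_{F'} → X` -/
  pull : ∀ {F F' : Type} [Field F] [Field F'] {ιF : k →+* F} {ιF' : k →+* F'}
    (e : F →+* F') (he : e.comp ιF = ιF') (X : Var F ιF), CH0 X →+ CH0 (bc e he X)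
  /-- proper pushforward along the projection `X_{F'} → X`, for `F'/F` finite -/
  push : ∀ {F F' : Type} [Field F] [Field F'] {ιF : k →+* F} {ιF' : k →+* F'}
    (e : F →+* F') (he : e.comp ιF = ιF') (X : Var F ιF), CH0 (bc e he X) →+ CH0 X
  /-- pullback preserves degrees -/
  deg_pull : ∀ {F F' : Type} [Field F] [Field F'] {ιF : k →+* F} {ιF' : k →+* F'}
    (e : F →+* F') (he : e.comp ιF = ιF') (X : Var F ιF) (z : CH0 X),
    deg (pull e he X z) = deg z
  /-- pushforward multiplies degrees by `[F' : F]` -/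
  deg_push : ∀ {F F' : Type} [Field F] [Field F'] {ιF : k →+* F} {ιF' : k →+* F'}
    (e : F →+* F') (he : e.comp ιF = ιF') (X : Var F ιF) (z : CH0 (bc e he X)),
    deg (push e he X z) =
      (@Module.finrank F F' _ _ (RingHom.toAlgebra e).toModule : ℤ) * deg z

attribute [instance] ZeroCycleTheory.ab

/-- The reduced Chow group `A₀(X) ⊆ CH₀(X)`: classes of zero-cycles of degree zero. -/
def ZeroCycleTheory.A0 {k : Type} [Field k] (Z : ZeroCycleTheory k) {F : Type} [Field F]
    {ιF : k →+* F} (X : Z.Var F ιF) : AddSubgroup (Z.CH0 X) :=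
  (Z.deg (X := X)).ker

/-!
Write each of the finitely many classes of `A₀(X)` as a difference of effective classes and let
`v` be the sum of the subtracted parts; then `κ + v` is effective for every `κ ∈ A₀(X)`. If `d`
generates the image of the degree map and `a - b`, with `a` and `b` effective, has degree `d`,
say `deg b = β d`, then nonnegative combinations of `a` and `b` have every degree `n d` with
`n ≥ β²`, because `β` and `β + 1` generate every integer `n ≥ β²` as a monoid. A class `x` of
degree at least `deg v + β² d` is then `(x - v - e) + v + e` with `e` effective of degree
`deg x - deg v`, and `x - v - e` lies in `A₀(X)`.
-/

namespace Nat

theorem exists_mul_succ_add_mul_eq {n t : ℕ} (h : n * n ≤ t) :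
    ∃ u v : ℕ, u * (n + 1) + v * n = t := by
  refine ⟨t % n, t / n - t % n, ?_⟩
  rcases n.eq_zero_or_pos with rfl | hn
  · simp
  · have hmod : t % n ≤ t / n :=
      ((Nat.mod_lt t hn).trans_le ((Nat.le_div_iff_mul_le hn).2 h)).le
    have hdiv := Nat.div_add_mod t n
    zify [hmod] at hdiv ⊢
    linear_combination hdiv

end Nat

namespace Int

theorem exists_nat_mem_iff_dvd (H : AddSubgroup ℤ) : ∃ d : ℕ, ∀ t, t ∈ H ↔ (d : ℤ) ∣ t := by
  obtain ⟨a, rfl⟩ := Int.subgroup_cyclic H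
  refine ⟨a.natAbs, fun t => ?_⟩
  rw [← AddSubgroup.zmultiples_eq_closure, Int.mem_zmultiples_iff, Int.natAbs_dvd]

theorem exists_nat_le_and_eq_mul_of_dvd {d N : ℕ} {t : ℤ} (hdvd : (d : ℤ) ∣ t)
    (ht : N * d ≤ t) : ∃ n : ℕ, N ≤ n ∧ t = n * d := by
  rcases d.eq_zero_or_pos with rfl | hd
  · exact ⟨N, le_rfl, by simpa using hdvd⟩
  · obtain ⟨q, rfl⟩ := hdvd
    have hq : (N : ℤ) ≤ q := le_of_mul_le_mul_right (a := (d : ℤ)) (by linarith) (by exact_mod_cast hd)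
    exact ⟨q.toNat, by omega, by rw [Int.toNat_of_nonneg (by omega)]; ring⟩

end Int

namespace AddSubmonoid

theorem exists_map_eq_mul_of_le {C : Type*} [AddCommMonoid C] {M : AddSubmonoid C}
    {f : C →+ ℤ} {a b : C} (ha : a ∈ M) (hb : b ∈ M) {β : ℕ} {d : ℤ}
    (hfb : f b = β * d) (hfa : f a = (β + 1) * d) {n : ℕ} (hn : β * β ≤ n) :
    ∃ e ∈ M, f e = n * d := by
  obtain ⟨u, v, huv⟩ := Nat.exists_mul_succ_add_mul_eq hn
  refine ⟨u • a + v • b, M.add_mem (M.nsmul_mem ha u) (M.nsmul_mem hb v), ?_⟩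
  rw [map_add, map_nsmul, map_nsmul, hfa, hfb, nsmul_eq_mul, nsmul_eq_mul, ← huv]
  push_cast
  ring

variable {C : Type*} [AddCommGroup C] {M : AddSubmonoid C}

theorem exists_mem_forall_add_mem {S : Set C} (hS : S.Finite)
    (hSM : ∀ x ∈ S, ∃ a ∈ M, ∃ b ∈ M, a - b = x) : ∃ v ∈ M, ∀ x ∈ S, x + v ∈ M := by
  induction S, hS using Set.Finite.induction_on with
  | empty => exact ⟨0, M.zero_mem, by simp⟩
  | @insert x S _ _ ih =>
    obtain ⟨v, hv, hvS⟩ := ih fun y hy => hSM y (Set.mem_insert_of_mem x hy)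
    obtain ⟨a, ha, b, hb, rfl⟩ := hSM _ (Set.mem_insert _ S)
    refine ⟨v + b, M.add_mem hv hb, ?_⟩
    rintro y (rfl | hy)
    · convert M.add_mem ha hv using 1
      abel
    · convert M.add_mem (hvS y hy) hb using 1
      abel

theorem exists_forall_le_mem_of_finite_ker (f : C →+ ℤ) [Finite f.ker]
    (hM : ∀ x, ∃ a ∈ M, ∃ b ∈ M, a - b = x) (hf : ∀ x ∈ M, 0 ≤ f x) :
    ∃ m : ℤ, ∀ x, m ≤ f x → x ∈ M := by
  obtain ⟨d, hd⟩ := Int.exists_nat_mem_iff_dvd f.range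
  have hdvd : ∀ x, (d : ℤ) ∣ f x := fun x => (hd _).1 ⟨x, rfl⟩
  obtain ⟨z, hz⟩ := (hd d).2 dvd_rfl
  obtain ⟨a, ha, b, hb, rfl⟩ := hM z
  obtain ⟨β, -, hfb⟩ :=
    Int.exists_nat_le_and_eq_mul_of_dvd (N := 0) (hdvd b) (by simpa using hf b hb)
  have hfa : f a = (β + 1) * d := by
    rw [map_sub] at hz
    linarith
  obtain ⟨v, hv, hker⟩ :=
    exists_mem_forall_add_mem (Set.toFinite (f.ker : Set C)) fun x _ => hM x
  refine ⟨f v + β * β * d, fun x hx => ?_⟩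
  obtain ⟨n, hn, hxn⟩ := Int.exists_nat_le_and_eq_mul_of_dvd (N := β * β)
    (dvd_sub (hdvd x) (hdvd v)) (by push_cast; linarith)
  obtain ⟨e, he, hfe⟩ := exists_map_eq_mul_of_le ha hb hfb hfa hn
  have hK : x - v - e ∈ f.ker := by
    rw [AddMonoidHom.mem_ker, map_sub, map_sub]
    linarith
  convert M.add_mem (hker _ hK) he using 1
  abel

end AddSubmonoid

namespace ZeroCycleTheory

variable {k : Type} [Field k] (Z : ZeroCycleTheory k) {F : Type} [Field F] {ιF : k →+* F}
  (X : Z.Var F ιF)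

def effective : AddSubmonoid (Z.CH0 X) :=
  (AddSubmonoid.nonneg (Z.Pt X →₀ ℤ)).map Z.cl

theorem exists_effective_sub_eq (x : Z.CH0 X) :
    ∃ a ∈ Z.effective X, ∃ b ∈ Z.effective X, a - b = x := by
  obtain ⟨c, rfl⟩ := Z.cl_surjective X x
  exact ⟨Z.cl c⁺, ⟨c⁺, posPart_nonneg c, rfl⟩, Z.cl c⁻, ⟨c⁻, negPart_nonneg c, rfl⟩,
    by rw [← map_sub, posPart_sub_negPart]⟩

theorem deg_nonneg_of_mem_effective {x : Z.CH0 X} (hx : x ∈ Z.effective X) : 0 ≤ Z.deg x := by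
  obtain ⟨c, hc, rfl⟩ := hx
  rw [Z.deg_cl]
  exact Finset.sum_nonneg fun y _ => mul_nonneg (Finsupp.le_def.1 hc y) (Int.natCast_nonneg _)

theorem exists_forall_le_deg_mem_effective [Finite (Z.A0 X)] :
    ∃ m : ℤ, ∀ x, m ≤ Z.deg x → x ∈ Z.effective X :=
  have : Finite (Z.deg (X := X)).ker := ‹Finite (Z.A0 X)›
  AddSubmonoid.exists_forall_le_mem_of_finite_ker Z.deg (Z.exists_effective_sub_eq X)
    fun _ => Z.deg_nonneg_of_mem_effective X

end ZeroCycleTheory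

theorem effective_of_large_degree_of_A0_finite_general
    (k : Type) [Field k]
    (Z : ZeroCycleTheory k)
    (X : Z.Var k (RingHom.id k))
    (hfin : Finite (Z.A0 X)) :
    ∃ m : ℕ, 1 ≤ m ∧ ∀ c : Z.Pt X →₀ ℤ,
      (m : ℤ) ≤ (c.sum fun x n => n * (Z.ptDeg x : ℤ)) →
      ∃ c' : Z.Pt X →₀ ℤ, (∀ x, 0 ≤ c' x) ∧ Z.cl c' = Z.cl c := by
  obtain ⟨m, hm⟩ := Z.exists_forall_le_deg_mem_effective X
  refine ⟨(max m 1).toNat, by omega, fun c hc => ?_⟩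
  rw [← Z.deg_cl] at hc
  obtain ⟨c', hc', hcl⟩ := hm (Z.cl c) (by omega)
  exact ⟨c', Finsupp.le_def.1 hc', hcl⟩

/-- **Proposition 12, (i) ⟹ (ii)** of Colliot-Thélène's article.

Let `k` be a `p`-adic field and `X` a smooth projective rationally connected `k`-variety
(rational connectedness being expressed, in characteristic zero, by chain rational
connectedness: `X(Ω)/R` is a single point for every algebraically closed `Ω ⊇ k`).  If the
group `A₀(X)` is finite, then there is an integer `m ≥ 1` such that every zero-cycle on `X`
of degree at least `m` is rationally equivalent to an effective zero-cycle. -/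
theorem effective_of_large_degree_of_A0_finite
    (p : ℕ) [Fact p.Prime]
    (k : Type) [Field k] [Algebra ℚ_[p] k] [FiniteDimensional ℚ_[p] k]
    (Z : ZeroCycleTheory k)
    (X : Z.Var k (RingHom.id k))
    (hRC : ∀ (Ω : Type) [Field Ω] [IsAlgClosed Ω] (ιΩ : k →+* Ω)
      (x y : Z.rpt (Z.bc ιΩ (RingHom.comp_id ιΩ) X)),
      Relation.EqvGen (Z.relem (Z.bc ιΩ (RingHom.comp_id ιΩ) X)) x y)
    (hfin : Finite (Z.A0 X)) :
    ∃ m : ℕ, 1 ≤ m ∧ ∀ c : Z.Pt X →₀ ℤ,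
      (m : ℤ) ≤ (c.sum fun x n => n * (Z.ptDeg x : ℤ)) →
      ∃ c' : Z.Pt X →₀ ℤ, (∀ x, 0 ≤ c' x) ∧ Z.cl c' = Z.cl c :=
  effective_of_large_degree_of_A0_finite_general k Z X hfin
end
end
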